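/- (Eckart–Young for the projection form) For W ∈ ℝ^{m×k} with SVD W = U S Vᵀ and any matrix Q ∈ ℝ^{m×r} with orthonormal columns, ‖W − Q Qᵀ W‖_F ≥ ‖W − P_r P_rᵀ W‖_F, where P_r contains the first r left singular vectors of W. -/
import Mathlib


open Matrix

lemma err_trace {m k r : ℕ} (W : Matrix (Fin m) (Fin k) ℝ)
    (Q : Matrix (Fin m) (Fin r) ℝ) (hQ : Qᵀ * Q = 1) :
    trace ((W - Q * Qᵀ * W) * (W - Q * Qᵀ * W)ᵀ)
      = trace (W * Wᵀ) - trace ((Qᵀ * W) * (Qᵀ * W)ᵀ) := by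
  have h1 : (W - Q * Qᵀ * W) * (W - Q * Qᵀ * W)ᵀ
      = W * Wᵀ - W * Wᵀ * Q * Qᵀ - Q * Qᵀ * (W * Wᵀ)
        + Q * Qᵀ * (W * Wᵀ) * Q * Qᵀ := by
    simp only [transpose_sub, transpose_mul, transpose_transpose, Matrix.sub_mul,
      Matrix.mul_sub, Matrix.mul_assoc]
    abel
  have hA : trace (W * Wᵀ * Q * Qᵀ) = trace ((Qᵀ * W) * (Qᵀ * W)ᵀ) := by
    rw [trace_mul_comm (W * Wᵀ * Q) Qᵀ]
    simp only [transpose_mul, transpose_transpose, Matrix.mul_assoc]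
  have hB : trace (Q * Qᵀ * (W * Wᵀ)) = trace ((Qᵀ * W) * (Qᵀ * W)ᵀ) := by
    rw [Matrix.mul_assoc, trace_mul_comm Q (Qᵀ * (W * Wᵀ))]
    simp only [transpose_mul, transpose_transpose, Matrix.mul_assoc]
  have hC : trace (Q * Qᵀ * (W * Wᵀ) * Q * Qᵀ) = trace ((Qᵀ * W) * (Qᵀ * W)ᵀ) := by
    rw [trace_mul_comm (Q * Qᵀ * (W * Wᵀ) * Q) Qᵀ, ← Matrix.mul_assoc Qᵀ,
      ← Matrix.mul_assoc Qᵀ, ← Matrix.mul_assoc Qᵀ, hQ, Matrix.one_mul]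
    simp only [transpose_mul, transpose_transpose, Matrix.mul_assoc]
  rw [h1, trace_add, trace_sub, trace_sub, hA, hB, hC]
  ring

lemma sum_ite_lt (m r : ℕ) (hrm : r ≤ m) :
    ∑ l : Fin m, (if (l : ℕ) < r then (1:ℝ) else 0) = r := by
  rw [Fin.sum_univ_eq_sum_range (fun l => if l < r then (1:ℝ) else 0) m,
    ← Finset.sum_filter]
  have h : (Finset.range m).filter (fun l => l < r) = Finset.range r := by
    ext x; simp; omega
  simp [h]

lemma rearrange (m r : ℕ) (hrm : r ≤ m) (s d : Fin m → ℝ)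
    (hs0 : ∀ l, 0 ≤ s l) (hsa : ∀ l l' : Fin m, l ≤ l' → s l' ≤ s l)
    (hd0 : ∀ l, 0 ≤ d l) (hd1 : ∀ l, d l ≤ 1) (hdsum : ∑ l, d l = r) :
    ∑ l, s l * d l ≤ ∑ l : Fin m, (if (l : ℕ) < r then s l else 0) := by
  set τ : ℝ := if h : r < m then s ⟨r, h⟩ else 0 with hτ
  have key : ∀ l : Fin m, s l * d l ≤
      (if (l:ℕ) < r then s l else 0) + τ * (d l - (if (l:ℕ) < r then 1 else 0)) := by
    intro l
    by_cases hl : (l:ℕ) < r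
    · simp only [hl, if_pos]
      have hτle : τ ≤ s l := by
        by_cases h : r < m
        · rw [hτ, dif_pos h]
          exact hsa l ⟨r, h⟩ (by simp [Fin.le_def]; omega)
        · rw [hτ, dif_neg h]; exact hs0 l
      nlinarith [hd1 l, hd0 l, hs0 l]
    · simp only [hl, if_neg, not_false_iff]
      have hrm' : r < m := lt_of_le_of_lt (by omega : r ≤ (l:ℕ)) l.isLt
      have hle : s l ≤ τ := by
        rw [hτ, dif_pos hrm']
        exact hsa ⟨r, hrm'⟩ l (by simp [Fin.le_def]; omega)
      have := mul_le_mul_of_nonneg_right hle (hd0 l)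
      simpa using this.trans_eq (by ring)
  calc ∑ l, s l * d l
      ≤ ∑ l : Fin m, ((if (l:ℕ) < r then s l else 0) + τ * (d l - (if (l:ℕ) < r then 1 else 0))) :=
        Finset.sum_le_sum fun l _ => key l
    _ = ∑ l : Fin m, (if (l:ℕ) < r then s l else 0)
        + τ * (∑ l, d l - ∑ l : Fin m, (if (l:ℕ) < r then (1:ℝ) else 0)) := by
        rw [Finset.sum_add_distrib]
        congr 1
        rw [← Finset.mul_sum, Finset.sum_sub_distrib]
    _ = ∑ l : Fin m, (if (l:ℕ) < r then s l else 0) := by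
        rw [hdsum, sum_ite_lt m r hrm]; ring

lemma SS_diag {m k : ℕ} (σ : ℕ → ℝ) (S : Matrix (Fin m) (Fin k) ℝ)
    (hS : ∀ i j, S i j = if (i : ℕ) = (j : ℕ) then σ (i : ℕ) else 0) :
    S * Sᵀ = Matrix.diagonal (fun l : Fin m => if (l : ℕ) < k then σ (l : ℕ) ^ 2 else 0) := by
  ext l l'
  rw [Matrix.mul_apply]
  simp only [transpose_apply, hS]
  by_cases h : l = l'
  · subst h
    rw [Matrix.diagonal_apply_eq]
    by_cases hk : (l : ℕ) < k
    · rw [if_pos hk, Finset.sum_eq_single (⟨(l : ℕ), hk⟩ : Fin k)]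
      · simp [sq]
      · intro j _ hj
        have : (l : ℕ) ≠ (j : ℕ) := fun hc => hj (by ext; simp [← hc])
        simp [this]
      · simp
    · rw [if_neg hk]
      apply Finset.sum_eq_zero
      intro j _
      have : (l : ℕ) ≠ (j : ℕ) := by omega
      simp [this]
  · rw [Matrix.diagonal_apply_ne _ h]
    apply Finset.sum_eq_zero
    intro j _
    have hln : (l : ℕ) ≠ (l' : ℕ) := fun hc => h (Fin.ext hc)
    by_cases h1 : (l : ℕ) = (j : ℕ)
    · have : (l' : ℕ) ≠ (j : ℕ) := by omega
      simp [this]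
    · simp [h1]

lemma frob_mulS {m k r : ℕ} (σ : ℕ → ℝ) (S : Matrix (Fin m) (Fin k) ℝ)
    (hS : ∀ i j, S i j = if (i : ℕ) = (j : ℕ) then σ (i : ℕ) else 0)
    (A : Matrix (Fin r) (Fin m) ℝ) :
    trace ((A * S) * (A * S)ᵀ)
      = ∑ l : Fin m, (if (l : ℕ) < k then σ (l : ℕ) ^ 2 else 0) * ((Aᵀ * A) l l) := by
  have h1 : (A * S) * (A * S)ᵀ = A * ((S * Sᵀ) * Aᵀ) := by
    simp only [transpose_mul, Matrix.mul_assoc]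
  rw [h1, trace_mul_comm, Matrix.mul_assoc, ← Matrix.mul_assoc, SS_diag σ S hS, Matrix.mul_assoc]
  simp [Matrix.trace, Matrix.diag, Matrix.diagonal_mul, ite_mul]

lemma frob_eq {a b : ℕ} (M : Matrix (Fin a) (Fin b) ℝ) :
    ∑ i, ∑ j, (M i j) ^ 2 = trace (M * Mᵀ) := by
  simp [Matrix.trace, Matrix.diag, Matrix.mul_apply, sq]


/-- Eckart–Young, projection form: among all orthonormal projections
of rank r, projecting onto the first r left singular vectors minimizes the
Frobenius norm of the error. -/
theorem eckart_young_projection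
    (m k r : ℕ) (hr : r ≤ min m k)
    (W : Matrix (Fin m) (Fin k) ℝ)
    (U : Matrix (Fin m) (Fin m) ℝ) (V : Matrix (Fin k) (Fin k) ℝ)
    (S : Matrix (Fin m) (Fin k) ℝ) (σ : ℕ → ℝ)
    (hU : Uᵀ * U = 1) (hV : Vᵀ * V = 1)
    (hσ : Antitone σ) (hσ0 : ∀ j, 0 ≤ σ j)
    (hS : ∀ i j, S i j = if (i : ℕ) = (j : ℕ) then σ (i : ℕ) else 0)
    (hW : W = U * S * Vᵀ)
    (P : Matrix (Fin m) (Fin r) ℝ)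
    (hP : ∀ i (j : Fin r), P i j = U i (Fin.castLE (hr.trans (min_le_left m k)) j))
    (Q : Matrix (Fin m) (Fin r) ℝ) (hQ : Qᵀ * Q = 1) :
    Real.sqrt (∑ i, ∑ j, ((W - P * Pᵀ * W) i j) ^ 2) ≤
      Real.sqrt (∑ i, ∑ j, ((W - Q * Qᵀ * W) i j) ^ 2) := by
  have hrm : r ≤ m := hr.trans (min_le_left m k)
  have hrk : r ≤ k := hr.trans (min_le_right m k)
  have hUU : U * Uᵀ = 1 := mul_eq_one_comm.mp hU
  -- s : the squared singular values, viewed on Fin m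
  set s : Fin m → ℝ := fun l => if (l : ℕ) < k then σ (l : ℕ) ^ 2 else 0 with hs_def
  have hs0 : ∀ l, 0 ≤ s l := by
    intro l; rw [hs_def]; dsimp only
    split
    · positivity
    · exact le_rfl
  have hsa : ∀ l l' : Fin m, l ≤ l' → s l' ≤ s l := by
    intro l l' hll
    rw [hs_def]; dsimp only
    by_cases h' : (l' : ℕ) < k
    · have h : (l : ℕ) < k := lt_of_le_of_lt (by exact_mod_cast hll) h'
      rw [if_pos h', if_pos h]
      have h1 : σ (l' : ℕ) ≤ σ (l : ℕ) := hσ (by exact_mod_cast hll)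
      have h2 : 0 ≤ σ (l' : ℕ) := hσ0 _
      nlinarith
    · rw [if_neg h']
      exact hs0 l
  -- orthonormality of P
  have hPtP : Pᵀ * P = 1 := by
    ext i j
    rw [Matrix.mul_apply]
    simp only [transpose_apply, hP]
    have := congrFun (congrFun hU (Fin.castLE hrm i)) (Fin.castLE hrm j)
    rw [Matrix.mul_apply] at this
    simp only [transpose_apply] at this
    rw [this, Matrix.one_apply, Matrix.one_apply]
    congr 1
    simp [Fin.castLE_inj, eq_iff_iff]
  -- the matrices A = Xᵀ U and their Gram diagonals
  set AQ : Matrix (Fin r) (Fin m) ℝ := Qᵀ * U with hAQ_def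
  set AP : Matrix (Fin r) (Fin m) ℝ := Pᵀ * U with hAP_def
  have hAQo : AQ * AQᵀ = 1 := by
    rw [hAQ_def]
    simp only [transpose_mul, transpose_transpose]
    calc Qᵀ * U * (Uᵀ * Q) = Qᵀ * (U * Uᵀ) * Q := by
          simp only [Matrix.mul_assoc]
      _ = 1 := by rw [hUU, Matrix.mul_one, hQ]
  set dQ : Fin m → ℝ := fun l => (AQᵀ * AQ) l l with hdQ_def
  have hdQ0 : ∀ l, 0 ≤ dQ l := by
    intro l
    rw [hdQ_def]; dsimp only
    rw [Matrix.mul_apply]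
    apply Finset.sum_nonneg
    intro i _
    simp only [transpose_apply]
    exact mul_self_nonneg _
  have hMidem : (AQᵀ * AQ) * (AQᵀ * AQ) = AQᵀ * AQ := by
    calc (AQᵀ * AQ) * (AQᵀ * AQ) = AQᵀ * (AQ * AQᵀ) * AQ := by
          simp only [Matrix.mul_assoc]
      _ = AQᵀ * AQ := by rw [hAQo, Matrix.mul_one]
  have hdQ1 : ∀ l, dQ l ≤ 1 := by
    intro l
    have hsym : ∀ a b, (AQᵀ * AQ) a b = (AQᵀ * AQ) b a := by
      intro a b
      rw [Matrix.mul_apply, Matrix.mul_apply]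
      simp only [transpose_apply]
      exact Finset.sum_congr rfl fun x _ => mul_comm _ _
    have h1 : dQ l = ∑ j, ((AQᵀ * AQ) l j) ^ 2 := by
      conv_lhs => rw [hdQ_def]; dsimp only; rw [← hMidem]
      rw [Matrix.mul_apply]
      exact Finset.sum_congr rfl fun j _ => by rw [hsym j l, sq]
    have h2 : ((AQᵀ * AQ) l l) ^ 2 ≤ ∑ j, ((AQᵀ * AQ) l j) ^ 2 :=
      Finset.single_le_sum (f := fun j => ((AQᵀ * AQ) l j) ^ 2) (fun j _ => sq_nonneg _) (Finset.mem_univ l)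
    have h3 : dQ l ^ 2 ≤ dQ l := by
      calc dQ l ^ 2 = ((AQᵀ * AQ) l l) ^ 2 := rfl
        _ ≤ ∑ j, ((AQᵀ * AQ) l j) ^ 2 := h2
        _ = dQ l := h1.symm
    nlinarith [hdQ0 l]
  have hdQsum : ∑ l, dQ l = r := by
    have : ∑ l, dQ l = trace (AQᵀ * AQ) := rfl
    rw [this, trace_mul_comm, hAQo, trace_one]
    simp
  -- P-side diagonal
  have hAPe : ∀ (i : Fin r) (l : Fin m), AP i l = if Fin.castLE hrm i = l then 1 else 0 := by
    intro i l
    rw [hAP_def, Matrix.mul_apply]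
    simp only [transpose_apply, hP]
    have := congrFun (congrFun hU (Fin.castLE hrm i)) l
    rw [Matrix.mul_apply] at this
    simp only [transpose_apply] at this
    rw [this, Matrix.one_apply]
  have hdP : ∀ l : Fin m, (APᵀ * AP) l l = if (l : ℕ) < r then 1 else 0 := by
    intro l
    rw [Matrix.mul_apply]
    simp only [transpose_apply, hAPe]
    by_cases hl : (l : ℕ) < r
    · rw [if_pos hl, Finset.sum_eq_single (⟨(l : ℕ), hl⟩ : Fin r)]
      · have : Fin.castLE hrm (⟨(l : ℕ), hl⟩ : Fin r) = l := by ext; simp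
        rw [this]; simp
      · intro i _ hi
        have : Fin.castLE hrm i ≠ l := by
          intro hc
          apply hi; ext
          have := congrArg Fin.val hc
          simpa using this
        simp [this]
      · simp
    · rw [if_neg hl]
      apply Finset.sum_eq_zero
      intro i _
      have : Fin.castLE hrm i ≠ l := by
        intro hc
        have := congrArg Fin.val hc
        simp at this
        omega
      simp [this]
  -- reduction to traces
  have hred : ∀ (X : Matrix (Fin m) (Fin r) ℝ), Xᵀ * X = 1 →
      ∑ i, ∑ j, ((W - X * Xᵀ * W) i j) ^ 2
        = trace (W * Wᵀ) - trace (((Xᵀ * U) * S) * ((Xᵀ * U) * S)ᵀ) := by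
    intro X hX
    rw [frob_eq, err_trace W X hX]
    congr 1
    have h1 : Xᵀ * W = ((Xᵀ * U) * S) * Vᵀ := by
      rw [hW]; simp only [Matrix.mul_assoc]
    rw [h1]
    have h2 : (Xᵀ * U * S * Vᵀ) * (Xᵀ * U * S * Vᵀ)ᵀ
        = (Xᵀ * U * S) * (Vᵀ * V) * (Xᵀ * U * S)ᵀ := by
      simp only [transpose_mul, transpose_transpose, Matrix.mul_assoc]
    rw [h2, hV, Matrix.mul_one]
  have hQside : ∑ i, ∑ j, ((W - Q * Qᵀ * W) i j) ^ 2
      = trace (W * Wᵀ) - ∑ l, s l * dQ l := by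
    rw [hred Q hQ, frob_mulS σ S hS (Qᵀ * U)]
  have hPside : ∑ i, ∑ j, ((W - P * Pᵀ * W) i j) ^ 2
      = trace (W * Wᵀ) - ∑ l : Fin m, (if (l : ℕ) < r then s l else 0) := by
    rw [hred P hPtP, frob_mulS σ S hS (Pᵀ * U)]
    congr 1
    apply Finset.sum_congr rfl
    intro l _
    rw [hdP l]
    by_cases hl : (l : ℕ) < r <;> simp [hl, hs_def]
  apply Real.sqrt_le_sqrt
  rw [hQside, hPside]
  have := rearrange m r hrm s dQ hs0 hsa hdQ0 hdQ1 hdQsum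
  linarith
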